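/- Let P ⊆ ℝ^D be a full-dimensional pointed polyhedron that is the intersection of n closed halfspaces in general position. Let ℓ be a linear functional that attains its minimum over P and takes distinct values at distinct vertices of P, let B ∈ ℝ be strictly greater than the minimum value of ℓ on P, suppose every face of P on which ℓ < B holds pointwise is bounded, and suppose d = dim P^{ℓ<B} < D. Then the total number of nonempty faces f of P with ℓ < B pointwise on f is at most 2^d · C(n,d), where C(·,·) denotes the binomial coefficient. -/

import Mathlib

/-!
A face `f` below `B` is bounded, so it contains a vertex `w` maximizing `l` on `f`. At the
simple vertex `w` the `D` active constraints have a dual basis `e`, and the edges at `w` leave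
it along the directions `-e i`. As `l` separates vertices and the edges below `B` are bounded,
`l (e i) ≠ 0`; the edges along which `l` decreases (`l (e i) > 0`) span a face below `B`, so
there are at most `d` of them. Extend them to a `d`-set `A` of active constraints: then `w` is the
unique minimizer of `l` on the face cut out by `A`, so `A` determines `w`. Every constraint active
at `w` but not on all of `f` lies in `A`, because `f` contains the corresponding edge and
`l ≤ l w` on `f`. Hence `f ↦ (A, (active at w) \ (active on f))` is injective into the pairs
`S ⊆ A` with `#A = d`, of which there are `2 ^ d * n.choose d`.
-/

open Set Classical

/-- `f` is an (exposed) face of `P`: the empty set, `P` itself, or the set of maximizers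
of a linear functional over `P`. -/
def IsFace {V : Type*} [AddCommGroup V] [Module ℝ V] (P f : Set V) : Prop :=
  f = ∅ ∨ f = P ∨ ∃ l : V →ₗ[ℝ] ℝ, f = {x ∈ P | ∀ y ∈ P, l y ≤ l x}

/-- `v` is a vertex of `P`: the singleton `{v}` is a face of `P`. -/
def IsVertex {V : Type*} [AddCommGroup V] [Module ℝ V] (P : Set V) (v : V) : Prop :=
  IsFace P {v}

/-- Dimension of a face: `-1` for the empty face, otherwise the dimension of its
affine hull. -/
noncomputable def faceDim {V : Type*} [AddCommGroup V] [Module ℝ V] (f : Set V) : ℤ :=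
  if f = ∅ then -1 else (Module.finrank ℝ (affineSpan ℝ f).direction : ℤ)

open Filter Topology Bornology Module

section Algebraic

variable {V ι : Type*} [AddCommGroup V] [Module ℝ V]

def polyhedron (α : ι → V →ₗ[ℝ] ℝ) (b : ι → ℝ) : Set V :=
  {x | ∀ i, α i x ≤ b i}

def tightFace (α : ι → V →ₗ[ℝ] ℝ) (b : ι → ℝ) (S : Finset ι) : Set V :=
  {x ∈ polyhedron α b | ∀ i ∈ S, α i x = b i}

variable {α : ι → V →ₗ[ℝ] ℝ} {b : ι → ℝ}

lemma tightFace_subset_polyhedron (S : Finset ι) : tightFace α b S ⊆ polyhedron α b :=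
  fun _ hx => hx.1

lemma tightFace_anti {S S' : Finset ι} (h : S ⊆ S') : tightFace α b S' ⊆ tightFace α b S :=
  fun _ hx => ⟨hx.1, fun i hi => hx.2 i (h hi)⟩

lemma convex_polyhedron : Convex ℝ (polyhedron α b) := by
  have : polyhedron α b = ⋂ i, {x | α i x ≤ b i} := by ext; simp [polyhedron]
  exact this ▸ convex_iInter fun i => convex_halfSpace_le (α i).isLinear (b i)

lemma IsFace.subset {P f : Set V} (hf : IsFace P f) : f ⊆ P := by
  rcases hf with rfl | rfl | ⟨g, rfl⟩
  exacts [empty_subset _, subset_rfl, sep_subset _ _]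

lemma IsFace.convex {P f : Set V} (hP : Convex ℝ P) (hf : IsFace P f) : Convex ℝ f := by
  rcases hf with rfl | rfl | ⟨g, rfl⟩
  · exact convex_empty
  · exact hP
  · have : {x ∈ P | ∀ y ∈ P, g y ≤ g x} = P ∩ ⋂ y ∈ P, {x | g y ≤ g x} := by ext; simp
    exact this ▸ hP.inter (convex_iInter₂ fun y _ => convex_halfSpace_ge g.isLinear _)

lemma isFace_tightFace {S : Finset ι} (hne : (tightFace α b S).Nonempty) :
    IsFace (polyhedron α b) (tightFace α b S) := by
  refine .inr (.inr ⟨∑ i ∈ S, α i, ?_⟩)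
  obtain ⟨x₀, hx₀⟩ := hne
  have hle : ∀ y ∈ polyhedron α b, ∑ i ∈ S, α i y ≤ ∑ i ∈ S, b i :=
    fun y hy => Finset.sum_le_sum fun i _ => hy i
  ext x
  simp only [LinearMap.sum_apply, mem_ofPred_eq]
  constructor
  · intro hx
    exact ⟨hx.1, fun y hy =>
      (hle y hy).trans_eq (Finset.sum_congr rfl fun i hi => (hx.2 i hi).symm)⟩
  · rintro ⟨hx, hmax⟩
    have hsum : ∑ i ∈ S, α i x = ∑ i ∈ S, b i :=
      le_antisymm (hle x hx) ((Finset.sum_congr rfl fun i hi => (hx₀.2 i hi).symm).trans_le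
        (hmax x₀ hx₀.1))
    exact ⟨hx, (Finset.sum_eq_sum_iff_of_le fun i _ => hx i).1 hsum⟩

variable [Fintype ι]

noncomputable def activeSet (α : ι → V →ₗ[ℝ] ℝ) (b : ι → ℝ) (x : V) : Finset ι :=
  {i | α i x = b i}

noncomputable def activeSetOn (α : ι → V →ₗ[ℝ] ℝ) (b : ι → ℝ) (s : Set V) : Finset ι :=
  {i | ∀ x ∈ s, α i x = b i}

@[simp] lemma mem_activeSet {x : V} {i : ι} : i ∈ activeSet α b x ↔ α i x = b i := by
  simp [activeSet]

@[simp] lemma coe_activeSet (x : V) : (activeSet α b x : Set ι) = {i | α i x = b i} := by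
  ext; simp

@[simp] lemma mem_activeSetOn {s : Set V} {i : ι} :
    i ∈ activeSetOn α b s ↔ ∀ x ∈ s, α i x = b i := by
  simp [activeSetOn]

lemma activeSetOn_subset_activeSet {s : Set V} {x : V} (hx : x ∈ s) :
    activeSetOn α b s ⊆ activeSet α b x :=
  fun _ hi => mem_activeSet.2 (mem_activeSetOn.1 hi x hx)

lemma mem_tightFace_activeSet {x : V} (hx : x ∈ polyhedron α b) :
    x ∈ tightFace α b (activeSet α b x) :=
  ⟨hx, fun _ hi => mem_activeSet.1 hi⟩

lemma exists_pos_add_smul_mem {x u : V} (hx : x ∈ polyhedron α b)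
    (hu : ∀ i ∈ activeSet α b x, α i u ≤ 0) : ∃ t > (0 : ℝ), x + t • u ∈ polyhedron α b := by
  have hval : ∀ i (t : ℝ), α i (x + t • u) = α i x + t * α i u := by simp
  have hslack : ∀ᶠ t in 𝓝[>] (0 : ℝ), ∀ i ∉ activeSet α b x, α i (x + t • u) < b i := by
    refine eventually_all.2 fun i => ?_
    by_cases hi : i ∈ activeSet α b x
    · exact .of_forall fun _ h => (h hi).elim
    have hlt : α i x < b i := (hx i).lt_of_ne (by simpa using hi)
    have hcont : Continuous fun t : ℝ => α i x + t * α i u := by fun_prop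
    exact ((hcont.tendsto' 0 _ (by simp)).mono_left nhdsWithin_le_nhds).eventually_lt_const hlt
      |>.mono fun t h _ => hval i t ▸ h
  obtain ⟨t, hslack, ht⟩ := (hslack.and self_mem_nhdsWithin).exists
  refine ⟨t, ht, fun i => ?_⟩
  by_cases hi : i ∈ activeSet α b x
  · rw [hval, mem_activeSet.1 hi]
    nlinarith [hu i hi]
  · exact (hslack i hi).le

lemma exists_forall_lt_of_convex {s : Set V} (hs : Convex ℝ s) (hne : s.Nonempty)
    (hsP : s ⊆ polyhedron α b) : ∃ x ∈ s, ∀ i ∉ activeSetOn α b s, α i x < b i := by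
  suffices h : ∀ S : Finset ι, ∃ x ∈ s, ∀ i ∈ S, i ∉ activeSetOn α b s → α i x < b i by
    obtain ⟨x, hx, h⟩ := h Finset.univ
    exact ⟨x, hx, fun i => h i (Finset.mem_univ i)⟩
  intro S
  induction S using Finset.induction_on with
  | empty => obtain ⟨x, hx⟩ := hne; exact ⟨x, hx, by simp⟩
  | insert j S _ ih =>
    obtain ⟨x, hx, hxS⟩ := ih
    by_cases hj : j ∈ activeSetOn α b s
    · refine ⟨x, hx, fun i hi hia => ?_⟩
      rcases Finset.mem_insert.1 hi with rfl | hiS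
      exacts [(hia hj).elim, hxS i hiS hia]
    obtain ⟨y, hy, hyj⟩ : ∃ y ∈ s, α j y < b j := by
      simp only [mem_activeSetOn, not_forall] at hj
      obtain ⟨y, hy, hne⟩ := hj
      exact ⟨y, hy, (hsP hy j).lt_of_ne hne⟩
    refine ⟨(1 / 2 : ℝ) • x + (1 / 2 : ℝ) • y, hs hx hy (by norm_num) (by norm_num) (by norm_num),
      fun i hi hia => ?_⟩
    have hxi := hsP hx i
    have hyi := hsP hy i
    simp only [map_add, map_smul, smul_eq_mul]
    rcases Finset.mem_insert.1 hi with rfl | hiS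
    · linarith
    · linarith [hxS i hiS hia]

lemma IsFace.eq_tightFace {f : Set V} (hf : IsFace (polyhedron α b) f) (hne : f.Nonempty) :
    f = tightFace α b (activeSetOn α b f) := by
  refine subset_antisymm (fun x hx => ⟨hf.subset hx, fun i hi => mem_activeSetOn.1 hi x hx⟩) ?_
  obtain ⟨x₀, hx₀, hslack⟩ :=
    exists_forall_lt_of_convex (hf.convex convex_polyhedron) hne hf.subset
  rcases hf with rfl | rfl | ⟨g, rfl⟩
  · exact (not_nonempty_empty hne).elim
  · exact tightFace_subset_polyhedron _
  intro z hz
  -- moving from `x₀` away from `z` stays in the polyhedron, so `g z ≥ g x₀`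
  obtain ⟨t, ht, hmem⟩ := exists_pos_add_smul_mem (u := x₀ - z) hx₀.1 fun i hi => by
    have hiOn := not_not.1 fun h => (hslack i h).ne (mem_activeSet.1 hi)
    simp [mem_activeSet.1 hi, hz.2 i hiOn]
  have hle := hx₀.2 _ hmem
  simp only [map_add, map_smul, map_sub, smul_eq_mul] at hle
  have hgz : g x₀ ≤ g z := by nlinarith
  exact ⟨hz.1, fun y hy => (hx₀.2 y hy).trans hgz⟩

/-- The ratio test of the simplex method. -/
lemma exists_add_smul_mem_of_add_smul_notMem {x u : V} {t₁ : ℝ} (hx : x ∈ polyhedron α b)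
    (ht₁ : 0 ≤ t₁) (hout : x + t₁ • u ∉ polyhedron α b) :
    ∃ t ≥ (0 : ℝ), x + t • u ∈ polyhedron α b ∧ ∃ i, 0 < α i u ∧ α i (x + t • u) = b i := by
  have hval : ∀ i t, α i (x + t • u) = α i x + t * α i u := by simp
  set R : Finset ι := {i | 0 < α i u}
  have hR : R.Nonempty := by
    obtain ⟨i, hi⟩ : ∃ i, b i < α i (x + t₁ • u) := by simpa [polyhedron] using hout
    refine ⟨i, Finset.mem_filter.2 ⟨Finset.mem_univ i, ?_⟩⟩
    by_contra! h
    rw [hval] at hi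
    nlinarith [hx i]
  set ratio : ι → ℝ := fun i => (b i - α i x) / α i u
  obtain ⟨i, hiR, hmin⟩ := R.exists_min_image ratio hR
  have hiu : 0 < α i u := (Finset.mem_filter.1 hiR).2
  refine ⟨ratio i, div_nonneg (sub_nonneg.2 (hx i)) hiu.le, fun j => ?_, i, hiu, ?_⟩
  · rw [hval]
    rcases le_or_gt (α j u) 0 with hj | hj
    · nlinarith [hx j, div_nonneg (sub_nonneg.2 (hx i)) hiu.le]
    · have := hmin j (Finset.mem_filter.2 ⟨Finset.mem_univ j, hj⟩)
      rw [le_div_iff₀ hj] at this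
      linarith
  · rw [hval]
    simp only [ratio, div_mul_cancel₀ _ hiu.ne']
    ring

/-- At a simple vertex with active set `T`, the edges leave the vertex along the directions
`-e i`. -/
structure IsDualBasis (α : ι → V →ₗ[ℝ] ℝ) (T : Finset ι) (e : ι → V) : Prop where
  apply_eq : ∀ i ∈ T, ∀ j ∈ T, α j (e i) = if j = i then 1 else 0
  sum_smul : ∀ u, ∑ i ∈ T, α i u • e i = u

lemma exists_isDualBasis [FiniteDimensional ℝ V] {w : V}
    (hcard : {i | α i w = b i}.ncard = finrank ℝ V)
    (hli : LinearIndependent ℝ fun i : {i // α i w = b i} => α i) :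
    ∃ e, IsDualBasis α (activeSet α b w) e := by
  have hcard' : Fintype.card {i // α i w = b i} = finrank ℝ (Dual ℝ V) := by
    rw [Subspace.dual_finrank_eq, ← hcard, ← Nat.card_coe_set_eq, Nat.card_eq_fintype_card]
    rfl
  let β := basisOfLinearIndependentOfCardEqFinrank' _ hli hcard'
  let E := β.dualBasis.map (evalEquiv ℝ V).symm
  have hE : ∀ i j : {i // α i w = b i}, α j (E i) = if j = i then 1 else 0 := fun i j => by
    have hβ : β j = α j := by simp [β]
    rw [← β.dualBasis_apply_self, Basis.map_apply, apply_evalEquiv_symm_apply, hβ]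
  refine ⟨fun i => if h : α i w = b i then E ⟨i, h⟩ else 0, ⟨fun i hi j hj => ?_, fun u => ?_⟩⟩
  · rw [dif_pos (mem_activeSet.1 hi), hE ⟨i, mem_activeSet.1 hi⟩ ⟨j, mem_activeSet.1 hj⟩]
    simp [Subtype.ext_iff]
  · rw [Finset.sum_subtype _ fun i => mem_activeSet]
    conv_rhs => rw [← E.sum_repr u]
    refine Finset.sum_congr rfl fun i _ => ?_
    rw [dif_pos i.2]
    simp [E, β]

namespace IsDualBasis

variable {w : V} {e : ι → V}

lemma sub_eq_sum (he : IsDualBasis α (activeSet α b w) e) (x : V) :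
    x - w = ∑ i ∈ activeSet α b w, (α i x - b i) • e i := by
  rw [← he.sum_smul (x - w)]
  refine Finset.sum_congr rfl fun i hi => ?_
  rw [map_sub, mem_activeSet.1 hi]

lemma apply_sub_eq_sum (he : IsDualBasis α (activeSet α b w) e) (g : V →ₗ[ℝ] ℝ) (x : V) :
    g x - g w = ∑ i ∈ activeSet α b w, (α i x - b i) * g (e i) := by
  rw [← map_sub, he.sub_eq_sum x, map_sum]
  simp

lemma eq_of_forall_mem_activeSet (he : IsDualBasis α (activeSet α b w) e) {x : V}
    (hx : ∀ i ∈ activeSet α b w, α i x = b i) : x = w := by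
  rw [← sub_eq_zero, he.sub_eq_sum x]
  exact Finset.sum_eq_zero fun i hi => by simp [hx i hi]

lemma linearIndependent (he : IsDualBasis α (activeSet α b w) e) {S : Finset ι}
    (hS : S ⊆ activeSet α b w) : LinearIndependent ℝ fun i : S => e i := by
  refine LinearIndependent.of_comp (LinearMap.pi fun j : S => α j) ?_
  have : (LinearMap.pi fun j : S => α j) ∘ (fun i : S => e i) = Pi.basisFun ℝ S := by
    funext i j
    rw [Function.comp_apply, LinearMap.pi_apply, he.apply_eq i (hS i.2) j (hS j.2),
      Pi.basisFun_apply, Pi.single_apply]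
    exact if_congr Subtype.ext_iff.symm rfl rfl
  rw [this]
  exact (Pi.basisFun ℝ S).linearIndependent

lemma exists_pos_sub_smul_mem (he : IsDualBasis α (activeSet α b w) e)
    (hw : w ∈ polyhedron α b) {i : ι} (hi : i ∈ activeSet α b w) :
    ∃ t > (0 : ℝ), w - t • e i ∈ tightFace α b ((activeSet α b w).erase i) := by
  obtain ⟨t, ht, hmem⟩ := exists_pos_add_smul_mem (u := -e i) hw fun j hj => by
    rw [map_neg, he.apply_eq i hi j hj]
    split_ifs <;> norm_num
  refine ⟨t, ht, by simpa [sub_eq_add_neg] using hmem, fun j hj => ?_⟩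
  obtain ⟨hji, hj⟩ := Finset.mem_erase.1 hj
  simp [he.apply_eq i hi j hj, hji, mem_activeSet.1 hj]

lemma card_filter_pos_le [FiniteDimensional ℝ V] (he : IsDualBasis α (activeSet α b w) e)
    (hw : w ∈ polyhedron α b) {l : V →ₗ[ℝ] ℝ} {B : ℝ} {d : ℕ}
    (hdim : ∀ f, IsFace (polyhedron α b) f → (∀ x ∈ f, l x < B) → faceDim f ≤ d)
    (hwB : l w < B) : ((activeSet α b w).filter fun i => 0 < l (e i)).card ≤ d := by
  set S := (activeSet α b w).filter fun i => 0 < l (e i)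
  set F := tightFace α b (activeSet α b w \ S)
  have hwF : w ∈ F := ⟨hw, fun i hi => mem_activeSet.1 (Finset.mem_sdiff.1 hi).1⟩
  have hFB : ∀ x ∈ F, l x < B := by
    intro x hx
    have : l x - l w ≤ 0 := by
      rw [he.apply_sub_eq_sum]
      refine Finset.sum_nonpos fun i hi => ?_
      by_cases hiS : i ∈ S
      · exact mul_nonpos_of_nonpos_of_nonneg (sub_nonpos.2 (hx.1 i)) (Finset.mem_filter.1 hiS).2.le
      · simp [hx.2 i (Finset.mem_sdiff.2 ⟨hi, hiS⟩)]
    linarith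
  -- the edge along `-e i`, `i ∈ S`, lies in `F`
  have hdir : ∀ i ∈ S, e i ∈ (affineSpan ℝ F).direction := by
    intro i hi
    obtain ⟨t, ht, hmem⟩ := he.exists_pos_sub_smul_mem hw (Finset.mem_filter.1 hi).1
    have hmemF : w - t • e i ∈ F := tightFace_anti (fun j hj => Finset.mem_erase.2
      ⟨fun h => (Finset.mem_sdiff.1 hj).2 (h ▸ hi), (Finset.mem_sdiff.1 hj).1⟩) hmem
    have := (affineSpan ℝ F).direction.smul_mem t⁻¹ <|
      AffineSubspace.vsub_mem_direction (subset_affineSpan ℝ F hwF) (subset_affineSpan ℝ F hmemF)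
    simpa [smul_smul, ht.ne'] using this
  have hle : (S.card : ℤ) ≤ faceDim F := by
    rw [faceDim, if_neg (nonempty_iff_ne_empty.1 ⟨w, hwF⟩)]
    have := Submodule.finrank_mono <|
      Submodule.span_le.2 (range_subset_iff.2 fun i : S => hdir i i.2)
    rw [finrank_span_eq_card (he.linearIndependent (Finset.filter_subset _ _)),
      Fintype.card_coe] at this
    exact_mod_cast this
  exact_mod_cast hle.trans (hdim F (isFace_tightFace ⟨w, hwF⟩) hFB)

lemma lt_of_mem_tightFace (he : IsDualBasis α (activeSet α b w) e) {l : V →ₗ[ℝ] ℝ}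
    (hne : ∀ i ∈ activeSet α b w, l (e i) ≠ 0) {A : Finset ι}
    (hA : (activeSet α b w).filter (fun i => 0 < l (e i)) ⊆ A) {x : V}
    (hx : x ∈ tightFace α b A) (hxw : x ≠ w) : l w < l x := by
  have hneg : ∀ i ∈ activeSet α b w, i ∉ A → l (e i) < 0 := fun i hi hiA =>
    (not_lt.1 fun h => hiA (hA (Finset.mem_filter.2 ⟨hi, h⟩))).lt_of_ne (hne i hi)
  suffices 0 < l x - l w by linarith
  rw [he.apply_sub_eq_sum]
  refine Finset.sum_pos' (fun i hi => ?_) ?_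
  · by_cases hiA : i ∈ A
    · simp [hx.2 i hiA]
    · exact mul_nonneg_of_nonpos_of_nonpos (sub_nonpos.2 (hx.1 i)) (hneg i hi hiA).le
  · obtain ⟨i, hi, hxi⟩ : ∃ i ∈ activeSet α b w, α i x ≠ b i := by
      by_contra! h
      exact hxw (he.eq_of_forall_mem_activeSet h)
    have hiA : i ∉ A := fun h => hxi (hx.2 i h)
    exact ⟨i, hi, mul_pos_of_neg_of_neg (sub_neg.2 ((hx.1 i).lt_of_ne hxi)) (hneg i hi hiA)⟩

lemma nonneg_of_forall_le (he : IsDualBasis α (activeSet α b w) e) {f : Set V}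
    (hf : IsFace (polyhedron α b) f) (hwf : w ∈ f) {l : V →ₗ[ℝ] ℝ} (hmax : ∀ x ∈ f, l x ≤ l w)
    {i : ι} (hi : i ∈ activeSet α b w) (hif : i ∉ activeSetOn α b f) : 0 ≤ l (e i) := by
  obtain ⟨t, ht, hmem⟩ := he.exists_pos_sub_smul_mem (hf.subset hwf) hi
  have hsub : activeSetOn α b f ⊆ (activeSet α b w).erase i := fun j hj =>
    Finset.mem_erase.2 ⟨fun h => hif (h ▸ hj), activeSetOn_subset_activeSet hwf hj⟩
  have hmemf : w - t • e i ∈ f := by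
    rw [hf.eq_tightFace ⟨w, hwf⟩]
    exact tightFace_anti hsub hmem
  have := hmax _ hmemf
  simp only [map_sub, map_smul, smul_eq_mul] at this
  nlinarith

end IsDualBasis

end Algebraic

lemma Bornology.IsBounded.exists_add_smul_notMem {E : Type*} [NormedAddCommGroup E]
    [NormedSpace ℝ E] {s : Set E} (hs : IsBounded s) (x : E) {u : E} (hu : u ≠ 0) :
    ∃ t ≥ (0 : ℝ), x + t • u ∉ s := by
  obtain ⟨R, hR⟩ := hs.exists_norm_le
  have hu' : 0 < ‖u‖ := norm_pos_iff.2 hu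
  refine ⟨(|R| + ‖x‖ + 1) / ‖u‖, by positivity, fun h => ?_⟩
  have htu : ‖((|R| + ‖x‖ + 1) / ‖u‖) • u‖ = |R| + ‖x‖ + 1 := by
    rw [norm_smul, Real.norm_of_nonneg (by positivity), div_mul_cancel₀ _ hu'.ne']
  have := norm_sub_le (x + ((|R| + ‖x‖ + 1) / ‖u‖) • u) x
  rw [add_sub_cancel_left, htu] at this
  linarith [hR _ h, le_abs_self R]

lemma finite_and_ncard_le_of_injOn_sigma {β ι : Type*} [Fintype ι] {s : Set β} {d : ℕ}
    (φ : β → Σ _ : Finset ι, Finset ι) (hφ : ∀ x ∈ s, (φ x).1.card = d ∧ (φ x).2 ⊆ (φ x).1)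
    (hinj : s.InjOn φ) : s.Finite ∧ s.ncard ≤ 2 ^ d * (Fintype.card ι).choose d := by
  set T := (Finset.univ.powersetCard d).sigma fun A : Finset ι => A.powerset
  have hmaps : ∀ x ∈ s, φ x ∈ (T : Set _) := fun x hx => by simp [T, hφ x hx]
  have hT : T.card = 2 ^ d * (Fintype.card ι).choose d := by
    rw [Finset.card_sigma, Finset.sum_congr rfl fun A hA => by
      rw [Finset.card_powerset, (Finset.mem_powersetCard.1 hA).2], Finset.sum_const,
      Finset.card_powersetCard, Finset.card_univ, smul_eq_mul, mul_comm]
  refine ⟨(T.finite_toSet.subset (image_subset_iff.2 hmaps)).of_finite_image hinj, ?_⟩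
  calc s.ncard ≤ (T : Set _).ncard := ncard_le_ncard_of_injOn φ hmaps hinj T.finite_toSet
    _ = 2 ^ d * (Fintype.card ι).choose d := by rw [ncard_coe_finset, hT]

section Normed

variable {V ι : Type*} [NormedAddCommGroup V] [NormedSpace ℝ V] {α : ι → V →ₗ[ℝ] ℝ} {b : ι → ℝ}

lemma isClosed_tightFace [FiniteDimensional ℝ V] (S : Finset ι) : IsClosed (tightFace α b S) := by
  have hcont : ∀ i, Continuous (α i) := fun i => (α i).continuous_of_finiteDimensional
  have : tightFace α b S =
      (⋂ i, {x | α i x ≤ b i}) ∩ ⋂ i ∈ S, {x | α i x = b i} := by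
    ext; simp [tightFace, polyhedron]
  rw [this]
  exact (isClosed_iInter fun i => isClosed_le (hcont i) continuous_const).inter
    (isClosed_biInter fun i _ => isClosed_eq (hcont i) continuous_const)

variable [Fintype ι]

lemma tightFace_activeSet_eq_singleton {S : Finset ι} (hbdd : IsBounded (tightFace α b S))
    {g : V →ₗ[ℝ] ℝ} {w : V}
    (hw : MaximalFor (fun x => x ∈ tightFace α b S ∧ ∀ y ∈ tightFace α b S, g y ≤ g x)
      (activeSet α b) w) :
    tightFace α b (activeSet α b w) = {w} := by
  obtain ⟨⟨hwS, hwmax⟩, hwmaximal⟩ := hw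
  refine eq_singleton_iff_unique_mem.2 ⟨mem_tightFace_activeSet hwS.1, fun x hx => ?_⟩
  by_contra hxw
  -- push `w` along the line through `x`, in the direction in which `g` does not decrease,
  -- until a further constraint becomes active
  obtain ⟨u, hu, hgu, hαu⟩ : ∃ u : V, u ≠ 0 ∧ 0 ≤ g u ∧ ∀ i ∈ activeSet α b w, α i u = 0 := by
    have hαu : ∀ i ∈ activeSet α b w, α i (x - w) = 0 := fun i hi => by
      rw [map_sub, hx.2 i hi, mem_activeSet.1 hi, sub_self]
    rcases le_total 0 (g (x - w)) with h | h
    · exact ⟨x - w, sub_ne_zero.2 hxw, h, hαu⟩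
    · refine ⟨-(x - w), neg_ne_zero.2 (sub_ne_zero.2 hxw), by simpa using h, fun i hi => ?_⟩
      rw [map_neg, hαu i hi, neg_zero]
  have hval : ∀ i ∈ activeSet α b w, ∀ t : ℝ, α i (w + t • u) = b i := fun i hi t => by
    simp [hαu i hi, mem_activeSet.1 hi]
  have hray : ∀ t : ℝ, w + t • u ∈ polyhedron α b → w + t • u ∈ tightFace α b S :=
    fun t ht => ⟨ht, fun i hi => hval i (mem_activeSet.2 (hwS.2 i hi)) t⟩
  obtain ⟨t₁, ht₁, hout⟩ := hbdd.exists_add_smul_notMem w hu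
  obtain ⟨t, ht, hmem, i, hiu, hi⟩ :=
    exists_add_smul_mem_of_add_smul_notMem hwS.1 ht₁ fun h => hout (hray t₁ h)
  have hsub : activeSet α b w ⊆ activeSet α b (w + t • u) :=
    fun j hj => mem_activeSet.2 (hval j hj t)
  have hgt : ∀ y ∈ tightFace α b S, g y ≤ g (w + t • u) := fun y hy => by
    have : g w ≤ g (w + t • u) := by
      simp only [map_add, map_smul, smul_eq_mul]
      nlinarith
    exact (hwmax y hy).trans this
  have hnew : i ∉ activeSet α b w := fun h => hiu.ne' (hαu i h)
  exact hnew (hwmaximal ⟨hray t hmem, hgt⟩ hsub (mem_activeSet.2 hi))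

variable [FiniteDimensional ℝ V]

lemma exists_isVertex_forall_le {S : Finset ι} (hne : (tightFace α b S).Nonempty)
    (hbdd : IsBounded (tightFace α b S)) (g : V →ₗ[ℝ] ℝ) :
    ∃ w ∈ tightFace α b S, IsVertex (polyhedron α b) w ∧ ∀ x ∈ tightFace α b S, g x ≤ g w := by
  obtain ⟨w₀, hw₀, hmax₀⟩ := (Metric.isCompact_of_isClosed_isBounded (isClosed_tightFace S)
    hbdd).exists_isMaxOn hne g.continuous_of_finiteDimensional.continuousOn
  obtain ⟨w, hw⟩ := exists_maximalFor_of_wellFoundedGT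
    (fun x => x ∈ tightFace α b S ∧ ∀ y ∈ tightFace α b S, g y ≤ g x) (activeSet α b)
    ⟨w₀, hw₀, fun y hy => hmax₀ hy⟩
  have hvert := tightFace_activeSet_eq_singleton hbdd hw
  refine ⟨w, hw.1.1, ?_, hw.1.2⟩
  rw [IsVertex, ← hvert]
  exact isFace_tightFace (hvert ▸ singleton_nonempty w)

lemma IsDualBasis.apply_ne_zero {w : V} {e : ι → V} (he : IsDualBasis α (activeSet α b w) e)
    {l : V →ₗ[ℝ] ℝ} {B : ℝ}
    (hbdd : ∀ f, IsFace (polyhedron α b) f → (∀ x ∈ f, l x < B) → IsBounded f)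
    (hinj : ∀ u v, IsVertex (polyhedron α b) u → IsVertex (polyhedron α b) v → l u = l v → u = v)
    (hwv : IsVertex (polyhedron α b) w) (hwB : l w < B) {i : ι} (hi : i ∈ activeSet α b w) :
    l (e i) ≠ 0 := by
  intro h0
  have hw : w ∈ polyhedron α b := hwv.subset rfl
  set E := tightFace α b ((activeSet α b w).erase i)
  have hwE : w ∈ E := ⟨hw, fun j hj => mem_activeSet.1 (Finset.mem_of_mem_erase hj)⟩
  -- `l` is constant on the edge `E`, which is therefore bounded
  have hlE : ∀ x ∈ E, l x = l w := fun x hx => by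
    rw [← sub_eq_zero, he.apply_sub_eq_sum]
    refine Finset.sum_eq_zero fun j hj => ?_
    by_cases hji : j = i
    · simp [hji, h0]
    · simp [hx.2 j (Finset.mem_erase.2 ⟨hji, hj⟩)]
  have hEbdd := hbdd E (isFace_tightFace ⟨w, hwE⟩) fun x hx => (hlE x hx).symm ▸ hwB
  -- the far end of the edge is a second vertex with the same value of `l`
  obtain ⟨v, hvE, hvv, hvmax⟩ := exists_isVertex_forall_le ⟨w, hwE⟩ hEbdd (-α i)
  obtain ⟨t, ht, hmem⟩ := he.exists_pos_sub_smul_mem hw hi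
  have hvw : v ≠ w := by
    rintro rfl
    have := hvmax _ hmem
    simp [mem_activeSet.1 hi, he.apply_eq i hi i hi] at this
    linarith
  exact hvw (hinj v w hvv hwv (hlE v hvE))

variable {l : V →ₗ[ℝ] ℝ} {B : ℝ} {d : ℕ}

lemma exists_vertex_code
    (hgen : ∀ v, IsVertex (polyhedron α b) v → {i | α i v = b i}.ncard = finrank ℝ V ∧
      LinearIndependent ℝ fun i : {i // α i v = b i} => α i)
    (hinj : ∀ u v, IsVertex (polyhedron α b) u → IsVertex (polyhedron α b) v → l u = l v → u = v)
    (hbdd : ∀ f, IsFace (polyhedron α b) f → (∀ x ∈ f, l x < B) → IsBounded f)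
    (hd : d ≤ finrank ℝ V)
    (hdim : ∀ f, IsFace (polyhedron α b) f → (∀ x ∈ f, l x < B) → faceDim f ≤ d)
    {f : Set V} (hf : IsFace (polyhedron α b) f) (hne : f.Nonempty) (hfB : ∀ x ∈ f, l x < B) :
    ∃ w A, A.card = d ∧ w ∈ tightFace α b A ∧ (∀ x ∈ tightFace α b A, x ≠ w → l w < l x) ∧
      activeSetOn α b f ⊆ activeSet α b w ∧ activeSet α b w \ activeSetOn α b f ⊆ A := by
  have hfF := hf.eq_tightFace hne
  obtain ⟨w, hwf, hwv, hmax⟩ := exists_isVertex_forall_le (hfF ▸ hne) (hfF ▸ hbdd f hf hfB) l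
  rw [← hfF] at hwf hmax
  have hw := hf.subset hwf
  obtain ⟨e, he⟩ := exists_isDualBasis (hgen w hwv).1 (hgen w hwv).2
  have hne0 : ∀ i ∈ activeSet α b w, l (e i) ≠ 0 :=
    fun i hi => he.apply_ne_zero hbdd hinj hwv (hfB w hwf) hi
  have hcard : (activeSet α b w).card = finrank ℝ V := by
    rw [← ncard_coe_finset, coe_activeSet, (hgen w hwv).1]
  obtain ⟨A, hSA, hAw, hAcard⟩ := Finset.exists_subsuperset_card_eq (Finset.filter_subset _ _)
    (he.card_filter_pos_le hw hdim (hfB w hwf)) (hcard ▸ hd)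
  refine ⟨w, A, hAcard, ⟨hw, fun i hi => mem_activeSet.1 (hAw hi)⟩,
    fun x hx hxw => he.lt_of_mem_tightFace hne0 hSA hx hxw, activeSetOn_subset_activeSet hwf,
    fun i hi => hSA ?_⟩
  obtain ⟨hiw, hif⟩ := Finset.mem_sdiff.1 hi
  exact Finset.mem_filter.2
    ⟨hiw, (he.nonneg_of_forall_le hf hwf hmax hiw hif).lt_of_ne' (hne0 i hiw)⟩

theorem finite_and_ncard_faces_lt_le
    (hgen : ∀ v, IsVertex (polyhedron α b) v → {i | α i v = b i}.ncard = finrank ℝ V ∧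
      LinearIndependent ℝ fun i : {i // α i v = b i} => α i)
    (hinj : ∀ u v, IsVertex (polyhedron α b) u → IsVertex (polyhedron α b) v → l u = l v → u = v)
    (hbdd : ∀ f, IsFace (polyhedron α b) f → (∀ x ∈ f, l x < B) → IsBounded f)
    (hd : d ≤ finrank ℝ V)
    (hdim : ∀ f, IsFace (polyhedron α b) f → (∀ x ∈ f, l x < B) → faceDim f ≤ d) :
    {f | IsFace (polyhedron α b) f ∧ f.Nonempty ∧ ∀ x ∈ f, l x < B}.Finite ∧
      {f | IsFace (polyhedron α b) f ∧ f.Nonempty ∧ ∀ x ∈ f, l x < B}.ncard ≤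
        2 ^ d * (Fintype.card ι).choose d := by
  choose! w A hcard hwA hmin hsub hsdiff using
    fun f (hf : IsFace (polyhedron α b) f ∧ f.Nonempty ∧ ∀ x ∈ f, l x < B) =>
      exists_vertex_code hgen hinj hbdd hd hdim hf.1 hf.2.1 hf.2.2
  refine finite_and_ncard_le_of_injOn_sigma
    (fun f => ⟨A f, activeSet α b (w f) \ activeSetOn α b f⟩)
    (fun f hf => ⟨hcard f hf, hsdiff f hf⟩) fun f₁ hf₁ f₂ hf₂ h => ?_
  obtain ⟨hA, hS⟩ := Sigma.mk.inj_iff.1 h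
  have hw : w f₁ = w f₂ := by
    by_contra hne
    have h₁ := hmin f₁ hf₁ (w f₂) (hA ▸ hwA f₂ hf₂) (Ne.symm hne)
    have h₂ := hmin f₂ hf₂ (w f₁) (hA ▸ hwA f₁ hf₁) hne
    linarith
  have hOn : activeSetOn α b f₁ = activeSetOn α b f₂ := by
    rw [← Finset.sdiff_sdiff_eq_self (hsub f₁ hf₁), ← Finset.sdiff_sdiff_eq_self (hsub f₂ hf₂),
      eq_of_heq hS, hw]
  rw [hf₁.1.eq_tightFace hf₁.2.1, hf₂.1.eq_tightFace hf₂.2.1, hOn]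

end Normed

theorem general_pos_total_faces_general (D n : ℕ)
    (a : Fin n → Fin D → ℝ) (b : Fin n → ℝ)
    (P : Set (Fin D → ℝ)) (hP : P = ⋂ i, {x | ∑ j, a i j * x j ≤ b i})
    (hgenpos : ∀ v, IsVertex P v →
      {i : Fin n | ∑ j, a i j * v j = b i}.ncard = D ∧
      LinearIndependent ℝ (fun i : {i : Fin n // ∑ j, a i j * v j = b i} => a i))
    (l : (Fin D → ℝ) →ₗ[ℝ] ℝ)
    (hinj : ∀ u v, IsVertex P u → IsVertex P v → l u = l v → u = v)
    (B : ℝ)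
    (hbdd : ∀ f, IsFace P f → (∀ x ∈ f, l x < B) → Bornology.IsBounded f)
    (d : ℕ) (hdD : d < D)
    (hdim_le : ∀ f, IsFace P f → (∀ x ∈ f, l x < B) → faceDim f ≤ (d : ℤ)) :
    {f : Set (Fin D → ℝ) | IsFace P f ∧ f.Nonempty ∧ ∀ x ∈ f, l x < B}.Finite ∧
      {f : Set (Fin D → ℝ) | IsFace P f ∧ f.Nonempty ∧ ∀ x ∈ f, l x < B}.ncard ≤
        2 ^ d * n.choose d := by
  set α : Fin n → (Fin D → ℝ) →ₗ[ℝ] ℝ := fun i => dotProductEquiv ℝ (Fin D) (a i)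
  obtain rfl : P = polyhedron α b := hP.trans (by ext; simp [polyhedron, α, dotProduct])
  have hgen : ∀ v, IsVertex (polyhedron α b) v → {i | α i v = b i}.ncard = finrank ℝ (Fin D → ℝ) ∧
      LinearIndependent ℝ fun i : {i // α i v = b i} => α i := fun v hv =>
    ⟨(hgenpos v hv).1.trans (finrank_fin_fun ℝ).symm,
      (hgenpos v hv).2.map' _ (dotProductEquiv ℝ (Fin D)).ker⟩
  simpa using finite_and_ncard_faces_lt_le hgen hinj hbdd (by simpa using hdD.le) hdim_le

theorem general_pos_total_faces (D n : ℕ)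
    (a : Fin n → Fin D → ℝ) (b : Fin n → ℝ) (ha : ∀ i, a i ≠ 0)
    (P : Set (Fin D → ℝ)) (hP : P = ⋂ i, {x | ∑ j, a i j * x j ≤ b i})
    (hfull : affineSpan ℝ P = ⊤)
    (hpointed : ∃ v, IsVertex P v)
    (hgenpos : ∀ v, IsVertex P v →
      {i : Fin n | ∑ j, a i j * v j = b i}.ncard = D ∧
      LinearIndependent ℝ (fun i : {i : Fin n // ∑ j, a i j * v j = b i} => a i))
    (l : (Fin D → ℝ) →ₗ[ℝ] ℝ)
    (hinj : ∀ u v, IsVertex P u → IsVertex P v → l u = l v → u = v)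
    (B : ℝ)
    (hminB : ∃ m ∈ P, (∀ x ∈ P, l m ≤ l x) ∧ l m < B)
    (hbdd : ∀ f, IsFace P f → (∀ x ∈ f, l x < B) → Bornology.IsBounded f)
    (d : ℕ) (hdD : d < D)
    (hdim_le : ∀ f, IsFace P f → (∀ x ∈ f, l x < B) → faceDim f ≤ (d : ℤ))
    (hdim_ex : ∃ f, IsFace P f ∧ (∀ x ∈ f, l x < B) ∧ faceDim f = (d : ℤ)) :
    {f : Set (Fin D → ℝ) | IsFace P f ∧ f.Nonempty ∧ ∀ x ∈ f, l x < B}.Finite ∧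
      {f : Set (Fin D → ℝ) | IsFace P f ∧ f.Nonempty ∧ ∀ x ∈ f, l x < B}.ncard ≤
        2 ^ d * n.choose d :=
  general_pos_total_faces_general D n a b P hP hgenpos l hinj B hbdd d hdD hdim_le
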